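/- arXiv:2109.11327 — 2 statements merged into one kernel-verified Lean document; each statement's English description precedes it below -/
import Mathlib

section
/- Let a : (0,∞) → ℂ be smooth such that for every integer k ≥ 0 there is C_k with |a^{(k)}(r)| ≤ C_k r^{−k} for all r > 0. Then there exists a constant C (depending only on finitely many C_k) such that for every integer j ≥ 1, all r₁, r₂ ≥ 0 with 3/4 ≤ r₁ + r₂ ≤ 8/3, all b ∈ (0,2], and all α ∈ [−1,1]: ∫_0^1 | ∂_s [ |𝐧|^{−1/2} a(2^j |𝐧|) ( b cosh(αs) / (2 sinh²(s/2) + b²) − b / (s²/2 + b²) ) ] | ds ≤ C, where |𝐧| = |𝐧|(r₁,r₂,s). -/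
open MeasureTheory Real Set
open scoped ENNReal

private lemma sinh_le_cubic {x : ℝ} (h0 : 0 ≤ x) (h1 : x ≤ 1) : Real.sinh x ≤ x + x^3 := by
  have hx : |x| ≤ 1 := by rwa [abs_of_nonneg h0]
  have hb1 := Real.exp_bound hx (by norm_num : (0:ℕ) < 3)
  have hx' : |(-x)| ≤ 1 := by rwa [abs_neg]
  have hb2 := Real.exp_bound hx' (by norm_num : (0:ℕ) < 3)
  rw [Real.sinh_eq]
  simp only [Finset.sum_range_succ, Finset.sum_range_zero] at hb1 hb2
  rw [abs_of_nonneg h0] at hb1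
  rw [abs_neg, abs_of_nonneg h0] at hb2
  norm_num [Nat.factorial] at hb1 hb2
  have h3 : x^3 ≤ x := by nlinarith
  rw [abs_sub_le_iff] at hb1 hb2
  nlinarith [hb1.1, hb1.2, hb2.1, hb2.2, pow_nonneg h0 3]

private lemma cosh_sub_one (y : ℝ) : Real.cosh y - 1 = 2 * Real.sinh (y/2)^2 := by
  have h1 := Real.cosh_sq (y/2)
  have h2 := Real.cosh_two_mul (y/2)
  rw [show 2*(y/2) = y by ring] at h2
  linarith

private lemma rpow_half_bound {N : ℝ} (h : 3/4 ≤ N) : N ^ (-(1/2):ℝ) ≤ 2 := by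
  have hN : (0:ℝ) < N := by linarith
  have hnn : 0 ≤ N ^ (-(1/2):ℝ) := Real.rpow_nonneg hN.le _
  have hsq : (N ^ (-(1/2):ℝ))^2 = N ^ (-1:ℝ) := by
    rw [← Real.rpow_natCast (N ^ (-(1/2):ℝ)) 2, ← Real.rpow_mul hN.le]
    norm_num
  have h2 : N ^ (-1:ℝ) = N⁻¹ := Real.rpow_neg_one N
  have h3 : N⁻¹ ≤ 4/3 := by
    rw [inv_le_comm₀ (by linarith) (by norm_num)]; linarith
  nlinarith [hsq, h2, h3]

private lemma rpow_threehalf_bound {N : ℝ} (h : 3/4 ≤ N) : N ^ (-(1/2)-1:ℝ) ≤ 2 := by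
  have hN : (0:ℝ) < N := by linarith
  have hnn : 0 ≤ N ^ (-(1/2)-1:ℝ) := Real.rpow_nonneg hN.le _
  have hsq : (N ^ (-(1/2)-1:ℝ))^2 = N ^ (-3:ℝ) := by
    rw [← Real.rpow_natCast (N ^ (-(1/2)-1:ℝ)) 2, ← Real.rpow_mul hN.le]
    norm_num
  have h2 : N ^ (-3:ℝ) = (N^(3:ℕ))⁻¹ := by
    rw [show (-3:ℝ) = -(3:ℕ) by norm_num, Real.rpow_neg hN.le, Real.rpow_natCast]
  have h3 : (N^(3:ℕ))⁻¹ ≤ 4 := by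
    rw [inv_le_comm₀ (by positivity) (by norm_num)]
    have : (3/4:ℝ)^3 ≤ N^3 := pow_le_pow_left₀ (by norm_num) h 3
    norm_num at this ⊢
    linarith
  nlinarith [hsq, h2, h3]

section Abstract
variable {b s cA S2 Q1 Q2 : ℝ}

private lemma absQ21 (hb0 : 0 < b) (hs0 : 0 < s) (hs1 : s ≤ 1)
    (hQ1 : Q1 = 2*S2^2 + b^2) (hQ2 : Q2 = s^2/2 + b^2)
    (hS2a : s/2 ≤ S2) (hS2b : S2 ≤ s/2 + (s/2)^3) :
    Q2 ≤ Q1 ∧ Q1 ≤ Q2 + s^4 ∧ s*b ≤ Q2 ∧ s^2/2 ≤ Q2 ∧ 0 < Q1 ∧ 0 < Q2 := by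
  subst hQ1 hQ2
  have hS2nn : 0 ≤ S2 := le_trans (by linarith) hS2a
  have hsq := mul_self_le_mul_self hS2nn hS2b
  have hs2le1 : s^2 ≤ 1 := by nlinarith
  have hs64 : s^6 ≤ s^4 := by
    nlinarith [mul_le_mul_of_nonneg_left hs2le1 (pow_nonneg hs0.le 4)]
  refine ⟨by nlinarith, by nlinarith [hsq, hs64], by nlinarith [sq_nonneg (s-b)], by nlinarith,
    by positivity, by positivity⟩

set_option maxHeartbeats 800000 in
private lemma bracket_val_abs (hb0 : 0 < b) (hs0 : 0 < s) (hs1 : s ≤ 1)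
    (hQ1 : Q1 = 2*S2^2 + b^2) (hQ2 : Q2 = s^2/2 + b^2)
    (hS2a : s/2 ≤ S2) (hS2b : S2 ≤ s/2 + (s/2)^3)
    (hcA1 : 1 ≤ cA) (hcA2 : cA ≤ 1 + s^2/2 + s^4) :
    |b * cA / Q1 - b / Q2| ≤ 4 := by
  obtain ⟨fQ21, fQ12, fsb, fs2, hQ1_pos, hQ2_pos⟩ := absQ21 hb0 hs0 hs1 hQ1 hQ2 hS2a hS2b
  have hs2le1 : s^2 ≤ 1 := by nlinarith
  have key : b * cA / Q1 - b / Q2 = b * (cA * Q2 - Q1) / (Q1 * Q2) := by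
    field_simp
  have hnum : |cA * Q2 - Q1| ≤ 4*s^2*Q2 := by
    rw [abs_le]
    constructor
    · nlinarith [mul_nonneg (show (0:ℝ) ≤ cA - 1 by linarith) hQ2_pos.le,
        mul_le_mul_of_nonneg_left fs2 (sq_nonneg s),
        mul_nonneg (sq_nonneg s) hQ2_pos.le]
    · nlinarith [mul_le_mul_of_nonneg_right (show cA - 1 ≤ s^2/2 + s^4 by linarith) hQ2_pos.le,
        mul_le_mul_of_nonneg_right hs2le1 (mul_nonneg (sq_nonneg s) hQ2_pos.le),
        mul_nonneg (sq_nonneg s) hQ2_pos.le]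
  rw [key, abs_div, abs_mul, abs_of_pos hb0, abs_of_pos (mul_pos hQ1_pos hQ2_pos),
    div_le_iff₀ (mul_pos hQ1_pos hQ2_pos)]
  have e1 : s*(s*b) ≤ s*Q2 := mul_le_mul_of_nonneg_left fsb hs0.le
  have e2 : s*Q2 ≤ Q2 := by nlinarith
  calc b * |cA * Q2 - Q1| ≤ b * (4*s^2*Q2) := mul_le_mul_of_nonneg_left hnum hb0.le
    _ ≤ 4*(Q1*Q2) := by
        nlinarith [mul_le_mul_of_nonneg_right (show s*(s*b) ≤ Q1 by linarith) hQ2_pos.le]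

set_option maxHeartbeats 1600000 in
private lemma bracket_deriv_abs {sh w : ℝ} (hb0 : 0 < b) (hs0 : 0 < s) (hs1 : s ≤ 1)
    (hQ1 : Q1 = 2*S2^2 + b^2) (hQ2 : Q2 = s^2/2 + b^2)
    (hS2a : s/2 ≤ S2) (hS2b : S2 ≤ s/2 + (s/2)^3)
    (hcA1 : 1 ≤ cA) (hcA2 : cA ≤ 1 + s^2/2 + s^4)
    (hsh1 : s ≤ sh) (hsh2 : sh ≤ s + s^3) (hw : |w| ≤ sh) :
    |(b*w*Q1 - b*cA*sh)/Q1^2 - (0*Q2 - b*s)/Q2^2| ≤ 28 := by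
  obtain ⟨fQ21, fQ12, fsb, fs2, hQ1_pos, hQ2_pos⟩ := absQ21 hb0 hs0 hs1 hQ1 hQ2 hS2a hS2b
  have hs2le1 : s^2 ≤ 1 := by nlinarith
  have hcube : s^3 ≤ s := by nlinarith
  have hsh3 : sh ≤ 2*s := by linarith
  have hsplit : (b*w*Q1 - b*cA*sh)/Q1^2 - (0*Q2 - b*s)/Q2^2
      = b*w/Q1 + (b*s/Q2^2 - b*cA*sh/Q1^2) := by
    field_simp
    ring
  have hT : |b*w/Q1| ≤ 2 := by
    rw [abs_div, abs_of_pos hQ1_pos, div_le_iff₀ hQ1_pos, abs_mul, abs_of_pos hb0]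
    nlinarith [mul_le_mul_of_nonneg_left (le_trans hw hsh3) hb0.le, fsb, fQ21]
  have hQsq : Q2^2 ≤ Q1^2 := by nlinarith
  have hQ1le : Q1 ≤ 3*Q2 := by
    nlinarith [mul_le_mul_of_nonneg_right hs2le1 hQ2_pos.le,
      mul_le_mul_of_nonneg_left fs2 (sq_nonneg s)]
  have hR : |b*s/Q2^2 - b*cA*sh/Q1^2| ≤ 26 := by
    have hkey : b*s/Q2^2 - b*cA*sh/Q1^2 = b * (s*Q1^2 - cA*sh*Q2^2) / (Q1^2*Q2^2) := by
      field_simp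
    have hs4le : s^4 ≤ s^2 := by
      nlinarith [mul_le_mul_of_nonneg_left hs2le1 (sq_nonneg s)]
    have d1pre : cA - 1 ≤ (3/2)*s^2 := by linarith
    have d1 : (cA - 1)*sh ≤ 3*s^3 := by
      nlinarith [mul_le_mul d1pre hsh3 (by linarith : (0:ℝ) ≤ sh)
        (by positivity : (0:ℝ) ≤ (3/2)*s^2)]
    have d2 : sh - s ≤ s^3 := by linarith
    have d3 : Q1^2 - Q2^2 ≤ 4*s^4*Q2 := by
      nlinarith [mul_le_mul (show Q1 - Q2 ≤ s^4 by linarith)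
        (show Q1 + Q2 ≤ 4*Q2 by linarith) (by linarith : (0:ℝ) ≤ Q1 + Q2)
        (by positivity : (0:ℝ) ≤ s^4)]
    have hnum2 : |s*Q1^2 - cA*sh*Q2^2| ≤ 4*s^5*Q2 + 4*s^3*Q2^2 := by
      have m1 : (cA - 1)*sh*Q2^2 ≤ 3*s^3*Q2^2 := mul_le_mul_of_nonneg_right d1 (sq_nonneg Q2)
      have m2 : (sh - s)*Q2^2 ≤ s^3*Q2^2 := mul_le_mul_of_nonneg_right d2 (sq_nonneg Q2)
      have m3 : s*(Q1^2 - Q2^2) ≤ 4*s^5*Q2 := by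
        calc s*(Q1^2 - Q2^2) ≤ s*(4*s^4*Q2) := mul_le_mul_of_nonneg_left d3 hs0.le
          _ = 4*s^5*Q2 := by ring
      have m0 : 0 ≤ s*(Q1^2 - Q2^2) := mul_nonneg hs0.le (by linarith)
      have m4 : 0 ≤ (cA - 1)*sh*Q2^2 :=
        mul_nonneg (mul_nonneg (by linarith) (by linarith)) (sq_nonneg Q2)
      have m5 : 0 ≤ (sh - s)*Q2^2 := mul_nonneg (by linarith) (sq_nonneg Q2)
      rw [abs_le]
      constructor
      · nlinarith [mul_nonneg (mul_nonneg (pow_nonneg hs0.le 5) hQ2_pos.le)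
          (by norm_num : (0:ℝ) ≤ 4)]
      · nlinarith
    rw [hkey, abs_div, abs_mul, abs_of_pos hb0,
      abs_of_pos (by positivity : (0:ℝ) < Q1^2*Q2^2),
      div_le_iff₀ (by positivity : (0:ℝ) < Q1^2*Q2^2)]
    have p2 : s^3*b ≤ 2*Q2^2 := by
      nlinarith [mul_le_mul fs2 fsb (mul_nonneg hs0.le hb0.le) hQ2_pos.le]
    have p3 : s^5*b ≤ 4*Q2^3 := by
      nlinarith [mul_le_mul (mul_le_mul fs2 fs2 (by positivity) hQ2_pos.le) fsb
        (mul_nonneg hs0.le hb0.le) (by positivity : (0:ℝ) ≤ Q2*Q2)]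
    calc b * |s*Q1^2 - cA*sh*Q2^2| ≤ b * (4*s^5*Q2 + 4*s^3*Q2^2) :=
          mul_le_mul_of_nonneg_left hnum2 hb0.le
      _ ≤ 26*(Q1^2*Q2^2) := by
          nlinarith [mul_le_mul_of_nonneg_right p3 hQ2_pos.le,
            mul_le_mul_of_nonneg_right p2 (sq_nonneg Q2),
            mul_le_mul_of_nonneg_right hQsq (sq_nonneg Q2), sq_nonneg Q2, hQ2_pos]
  rw [hsplit]
  exact le_trans (abs_add_le _ _) (by linarith)

end Abstract

private lemma coshαs_le {α s : ℝ} (hα : |α| ≤ 1) (hs0 : 0 < s) (hs1 : s ≤ 1) :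
    Real.cosh (α*s) ≤ 1 + s^2/2 + s^4 := by
  have hαs : |α * s| ≤ |s| := by
    rw [abs_mul]
    calc |α| * |s| ≤ 1 * |s| := mul_le_mul_of_nonneg_right hα (abs_nonneg s)
      _ = |s| := one_mul _
  have h1 : Real.cosh (α*s) ≤ Real.cosh s := Real.cosh_le_cosh.2 hαs
  have h2 := cosh_sub_one s
  have ha := Real.self_le_sinh_iff.2 (show (0:ℝ) ≤ s/2 by linarith)
  have hb := sinh_le_cubic (show (0:ℝ) ≤ s/2 by linarith) (by linarith)
  have hS2nn : 0 ≤ Real.sinh (s/2) := le_trans (by linarith) ha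
  have hsq := mul_self_le_mul_self hS2nn hb
  have hs2le1 : s^2 ≤ 1 := by nlinarith
  have hs64 : s^6 ≤ s^4 := by
    nlinarith [mul_le_mul_of_nonneg_left hs2le1 (pow_nonneg hs0.le 4)]
  nlinarith [hsq, hs64]

private lemma sinh_αs_mul_le {α s : ℝ} (hα : |α| ≤ 1) (hs0 : 0 < s) :
    |Real.sinh (α*s) * α| ≤ Real.sinh s := by
  rw [abs_mul, Real.abs_sinh]
  have h1 : Real.sinh |α * s| ≤ Real.sinh s := by
    apply Real.sinh_le_sinh.2
    calc |α * s| = |α| * |s| := abs_mul _ _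
      _ ≤ 1 * |s| := mul_le_mul_of_nonneg_right hα (abs_nonneg s)
      _ = |s| := one_mul _
      _ = s := abs_of_pos hs0
  have h2 : (0:ℝ) ≤ Real.sinh |α * s| := Real.sinh_nonneg_iff.2 (abs_nonneg _)
  calc Real.sinh |α * s| * |α| ≤ Real.sinh s * 1 := mul_le_mul h1 hα (abs_nonneg α)
        (by linarith [Real.sinh_nonneg_iff.2 hs0.le] : (0:ℝ) ≤ Real.sinh s)
    _ = Real.sinh s := mul_one _

private lemma bracket_val {b α s : ℝ} (hb0 : 0 < b) (hα : |α| ≤ 1)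
    (hs0 : 0 < s) (hs1 : s ≤ 1) :
    |b * Real.cosh (α*s) / (2*Real.sinh (s/2)^2 + b^2) - b / (s^2/2 + b^2)| ≤ 4 :=
  bracket_val_abs hb0 hs0 hs1 rfl rfl
    (Real.self_le_sinh_iff.2 (by linarith))
    (sinh_le_cubic (by linarith) (by linarith))
    (Real.one_le_cosh _) (coshαs_le hα hs0 hs1)

private lemma bracket_deriv {b α s : ℝ} (hb0 : 0 < b) (hα : |α| ≤ 1)
    (hs0 : 0 < s) (hs1 : s ≤ 1) :
    |(b*(Real.sinh (α*s)*α)*(2*Real.sinh (s/2)^2 + b^2)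
        - b*Real.cosh (α*s)*Real.sinh s)/(2*Real.sinh (s/2)^2 + b^2)^2
      - (0*(s^2/2 + b^2) - b*s)/(s^2/2 + b^2)^2| ≤ 28 := by
  have h := bracket_deriv_abs (w := Real.sinh (α*s)*α) hb0 hs0 hs1 rfl rfl
    (Real.self_le_sinh_iff.2 (by linarith))
    (sinh_le_cubic (by linarith) (by linarith))
    (Real.one_le_cosh _) (coshαs_le hα hs0 hs1)
    (Real.self_le_sinh_iff.2 hs0.le) (sinh_le_cubic hs0.le hs1)
    (sinh_αs_mul_le hα hs0)
  convert h using 3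

private lemma assemble (B0 B1 : ℝ) (hB0 : 0 ≤ B0) (hB1 : 0 ≤ B1) (p q g e : ℝ) (A A' : ℂ)
    (hp : |p| ≤ 5) (hq : |q| ≤ 2) (hA : ‖A‖ ≤ B0) (hA' : ‖A'‖ ≤ 7*B1)
    (hg : |g| ≤ 4) (he : |e| ≤ 28) :
    ‖((p:ℂ) * A + (q:ℂ) * A') * (g:ℂ) + (q:ℂ) * A * (e:ℂ)‖ ≤ 100*(B0+B1) := by
  have h1 : ‖(p:ℂ) * A + (q:ℂ) * A'‖ ≤ 5*B0 + 2*(7*B1) := by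
    refine le_trans (norm_add_le _ _) ?_
    rw [norm_mul, norm_mul, Complex.norm_real, Complex.norm_real,
      Real.norm_eq_abs, Real.norm_eq_abs]
    exact add_le_add (mul_le_mul hp hA (norm_nonneg _) (by norm_num))
      (mul_le_mul hq hA' (norm_nonneg _) (by norm_num))
  have t1 : ‖((p:ℂ) * A + (q:ℂ) * A') * (g:ℂ)‖ ≤ (5*B0 + 2*(7*B1))*4 := by
    rw [norm_mul, Complex.norm_real, Real.norm_eq_abs]
    exact mul_le_mul h1 hg (abs_nonneg _) (by linarith)
  have t2 : ‖(q:ℂ) * A * (e:ℂ)‖ ≤ 2*B0*28 := by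
    rw [norm_mul, norm_mul, Complex.norm_real, Complex.norm_real,
      Real.norm_eq_abs, Real.norm_eq_abs]
    exact mul_le_mul (mul_le_mul hq hA (norm_nonneg _) (by norm_num)) he (abs_nonneg _)
      (by nlinarith)
  calc ‖((p:ℂ) * A + (q:ℂ) * A') * (g:ℂ) + (q:ℂ) * A * (e:ℂ)‖
      ≤ ‖((p:ℂ) * A + (q:ℂ) * A') * (g:ℂ)‖ + ‖(q:ℂ) * A * (e:ℂ)‖ := norm_add_le _ _
    _ ≤ (5*B0 + 2*(7*B1))*4 + 2*B0*28 := add_le_add t1 t2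
    _ ≤ 100*(B0+B1) := by nlinarith

/-- `|𝐧|(r₁,r₂,s) = √(r₁² + r₂² + 2 r₁ r₂ cosh s)`. -/
noncomputable def nNorm (r₁ r₂ s : ℝ) : ℝ :=
  Real.sqrt (r₁^2 + r₂^2 + 2 * r₁ * r₂ * Real.cosh s)

set_option maxHeartbeats 1600000 in
private lemma key_bound (a : ℝ → ℂ) (B0 B1 : ℝ) (hB0 : 0 ≤ B0) (hB1 : 0 ≤ B1)
    (hdiff : ∀ r : ℝ, 0 < r → DifferentiableAt ℝ a r)
    (h0 : ∀ r : ℝ, 0 < r → ‖a r‖ ≤ B0)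
    (h1 : ∀ r : ℝ, 0 < r → ‖deriv a r‖ ≤ B1 / r)
    (j : ℕ) (r₁ r₂ b α s : ℝ)
    (hr₁ : 0 ≤ r₁) (hr₂ : 0 ≤ r₂) (hlo : 3/4 ≤ r₁ + r₂) (hhi : r₁ + r₂ ≤ 8/3)
    (hb0 : 0 < b) (hb2 : b ≤ 2) (hα : |α| ≤ 1) (hs0 : 0 < s) (hs1 : s ≤ 1) :
    ‖deriv (fun t : ℝ =>
        ((nNorm r₁ r₂ t ^ (-(1/2:ℝ)) : ℝ) : ℂ) * a ((2:ℝ)^(j:ℕ) * nNorm r₁ r₂ t) *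
          ((b * Real.cosh (α * t) / (2 * Real.sinh (t/2)^2 + b^2) -
              b / (t^2/2 + b^2) : ℝ) : ℂ)) s‖ ≤ 100 * (B0 + B1) := by
  set u : ℝ → ℝ := fun t => r₁^2 + r₂^2 + 2*r₁*r₂*Real.cosh t with hu_def
  have hrr : r₁ * r₂ ≤ 16/9 := by nlinarith [sq_nonneg (r₁ - r₂)]
  have hrr0 : 0 ≤ r₁ * r₂ := mul_nonneg hr₁ hr₂
  have hu_lo : ∀ t, (3/4:ℝ)^2 ≤ u t := by
    intro t
    have := Real.one_le_cosh t
    simp only [hu_def]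
    nlinarith
  have hu_pos : ∀ t, 0 < u t := fun t => lt_of_lt_of_le (by norm_num) (hu_lo t)
  have hnN : ∀ t, nNorm r₁ r₂ t = Real.sqrt (u t) := fun t => rfl
  have hN_lo : ∀ t, 3/4 ≤ nNorm r₁ r₂ t := by
    intro t
    rw [hnN]
    have h := Real.sqrt_le_sqrt (hu_lo t)
    rwa [Real.sqrt_sq (by norm_num)] at h
  have hN_pos : ∀ t, 0 < nNorm r₁ r₂ t := fun t => lt_of_lt_of_le (by norm_num) (hN_lo t)
  -- derivative of the n-norm
  have hu' : HasDerivAt u (2*r₁*r₂*Real.sinh s) s :=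
    ((Real.hasDerivAt_cosh s).const_mul (2*r₁*r₂)).const_add (r₁^2+r₂^2)
  have hN' : HasDerivAt (nNorm r₁ r₂) (2*r₁*r₂*Real.sinh s / (2*Real.sqrt (u s))) s :=
    hu'.sqrt (ne_of_gt (hu_pos s))
  set N := nNorm r₁ r₂ s with hN_def
  set N' := 2*r₁*r₂*Real.sinh s / (2*Real.sqrt (u s)) with hN'_def
  have hsh_le : Real.sinh s ≤ s + s^3 := sinh_le_cubic hs0.le hs1
  have hsh_ge : s ≤ Real.sinh s := Real.self_le_sinh_iff.2 hs0.le
  have hcube : s^3 ≤ s := by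
    nlinarith [mul_le_mul_of_nonneg_left (show s^2 ≤ 1 by nlinarith) hs0.le]
  have hsh2 : Real.sinh s ≤ 2*s := by linarith
  have hN'_nonneg : 0 ≤ N' := by
    apply div_nonneg _ (by positivity)
    have : (0:ℝ) ≤ Real.sinh s := by linarith
    positivity
  have hN'_le : N' ≤ 5 := by
    rw [hN'_def, div_le_iff₀ (mul_pos two_pos (Real.sqrt_pos.2 (hu_pos s)))]
    have hsq : 3/4 ≤ Real.sqrt (u s) := by rw [← hnN]; exact hN_lo s
    nlinarith
  -- the rpow factor
  have hP : HasDerivAt (fun t : ℝ => ((nNorm r₁ r₂ t ^ (-(1/2:ℝ)) : ℝ) : ℂ))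
      ((N' * (-(1/2:ℝ)) * N ^ (-(1/2:ℝ) - 1) : ℝ) : ℂ) s :=
    (hN'.rpow_const (Or.inl (ne_of_gt (hN_pos s)))).ofReal_comp
  -- the a factor
  have hc : (0:ℝ) < (2:ℝ)^(j:ℕ) := by positivity
  have hX : 0 < (2:ℝ)^(j:ℕ) * N := mul_pos hc (hN_pos s)
  have hA : HasDerivAt (fun t : ℝ => a ((2:ℝ)^(j:ℕ) * nNorm r₁ r₂ t))
      (((2:ℝ)^(j:ℕ) * N') • deriv a ((2:ℝ)^(j:ℕ) * N)) s := by
    have ha' : HasDerivAt a (deriv a ((2:ℝ)^(j:ℕ) * N)) ((2:ℝ)^(j:ℕ) * N) :=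
      (hdiff _ hX).hasDerivAt
    exact ha'.scomp s (hN'.const_mul ((2:ℝ)^(j:ℕ)))
  -- the bracket factor
  have hαt : HasDerivAt (fun t : ℝ => α * t) α s := by
    simpa using (hasDerivAt_id s).const_mul α
  have hca : HasDerivAt (fun t : ℝ => Real.cosh (α*t)) (Real.sinh (α*s) * α) s := hαt.cosh
  have hnum1 : HasDerivAt (fun t : ℝ => b * Real.cosh (α*t)) (b*(Real.sinh (α*s)*α)) s :=
    hca.const_mul b
  have hhalf : HasDerivAt (fun t : ℝ => t/2) (1/2 : ℝ) s := (hasDerivAt_id s).div_const 2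
  have hsh' : HasDerivAt (fun t : ℝ => Real.sinh (t/2)) (Real.cosh (s/2) * (1/2)) s :=
    hhalf.sinh
  have hQ1d : HasDerivAt (fun t : ℝ => 2*Real.sinh (t/2)^2 + b^2) (Real.sinh s) s := by
    have h := ((hsh'.pow 2).const_mul 2).add_const (b^2)
    refine h.congr_deriv ?_
    have h2 := Real.sinh_two_mul (s/2)
    rw [show 2*(s/2) = s by ring] at h2
    rw [h2]
    push_cast
    ring_nf
  have hQ2d : HasDerivAt (fun t : ℝ => t^2/2 + b^2) s s := by
    have h := ((hasDerivAt_pow 2 s).div_const 2).add_const (b^2)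
    refine h.congr_deriv ?_
    norm_num
  have hQ1pos : (0:ℝ) < 2*Real.sinh (s/2)^2 + b^2 := by positivity
  have hQ2pos : (0:ℝ) < s^2/2 + b^2 := by positivity
  have hfrac1 : HasDerivAt (fun t : ℝ => b * Real.cosh (α*t) / (2*Real.sinh (t/2)^2 + b^2))
      ((b*(Real.sinh (α*s)*α)*(2*Real.sinh (s/2)^2 + b^2)
        - b*Real.cosh (α*s)*Real.sinh s)/(2*Real.sinh (s/2)^2 + b^2)^2) s := by
    have h := hnum1.div hQ1d (ne_of_gt hQ1pos)
    exact h
  have hfrac2 : HasDerivAt (fun t : ℝ => b / (t^2/2 + b^2))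
      ((0*(s^2/2 + b^2) - b*s)/(s^2/2 + b^2)^2) s :=
    (hasDerivAt_const s b).div hQ2d (ne_of_gt hQ2pos)
  have hgr : HasDerivAt (fun t : ℝ => b * Real.cosh (α*t) / (2*Real.sinh (t/2)^2 + b^2)
      - b / (t^2/2 + b^2))
      ((b*(Real.sinh (α*s)*α)*(2*Real.sinh (s/2)^2 + b^2)
        - b*Real.cosh (α*s)*Real.sinh s)/(2*Real.sinh (s/2)^2 + b^2)^2
       - (0*(s^2/2 + b^2) - b*s)/(s^2/2 + b^2)^2) s := hfrac1.sub hfrac2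
  have hG : HasDerivAt (fun t : ℝ => ((b * Real.cosh (α * t) / (2 * Real.sinh (t/2)^2 + b^2) -
      b / (t^2/2 + b^2) : ℝ) : ℂ))
      (((b*(Real.sinh (α*s)*α)*(2*Real.sinh (s/2)^2 + b^2)
        - b*Real.cosh (α*s)*Real.sinh s)/(2*Real.sinh (s/2)^2 + b^2)^2
       - (0*(s^2/2 + b^2) - b*s)/(s^2/2 + b^2)^2 : ℝ) : ℂ) s := hgr.ofReal_comp
  -- norm bounds
  have hPs_abs : |N ^ (-(1/2:ℝ))| ≤ 2 := by
    rw [abs_of_nonneg (Real.rpow_nonneg (hN_pos s).le _)]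
    exact rpow_half_bound (hN_lo s)
  have hP'_abs : |N' * (-(1/2:ℝ)) * N ^ (-(1/2:ℝ) - 1)| ≤ 5 := by
    rw [abs_mul, abs_mul, abs_of_nonneg hN'_nonneg,
      abs_of_nonneg (Real.rpow_nonneg (hN_pos s).le _),
      (by norm_num : |(-(1/2):ℝ)| = 1/2)]
    nlinarith [rpow_threehalf_bound (hN_lo s), Real.rpow_nonneg (hN_pos s).le (-(1/2:ℝ) - 1)]
  have hAs : ‖a ((2:ℝ)^(j:ℕ) * nNorm r₁ r₂ s)‖ ≤ B0 := h0 _ hX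
  have hA'_norm : ‖(((2:ℝ)^(j:ℕ) * N') • deriv a ((2:ℝ)^(j:ℕ) * N) : ℂ)‖ ≤ 7*B1 := by
    rw [norm_smul, Real.norm_eq_abs, abs_of_nonneg (mul_nonneg hc.le hN'_nonneg)]
    have hd := h1 _ hX
    calc (2:ℝ)^(j:ℕ) * N' * ‖deriv a ((2:ℝ)^(j:ℕ) * N)‖
        ≤ (2:ℝ)^(j:ℕ) * N' * (B1/((2:ℝ)^(j:ℕ) * N)) :=
          mul_le_mul_of_nonneg_left hd (mul_nonneg hc.le hN'_nonneg)
      _ = N' * B1 / N := by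
          have hNne : N ≠ 0 := (hN_pos s).ne'
          field_simp
      _ ≤ 7*B1 := by
          rw [div_le_iff₀ (hN_pos s)]
          nlinarith [mul_le_mul_of_nonneg_right hN'_le hB1,
            mul_le_mul_of_nonneg_left (hN_lo s) hB1]
  have hbr_val := bracket_val hb0 hα hs0 hs1
  have hbr_der := bracket_deriv hb0 hα hs0 hs1
  have hF := (hP.mul hA).mul hG
  simp only [Pi.mul_def] at hF
  rw [hF.deriv]
  exact assemble B0 B1 hB0 hB1 _ _ _ _ _ _ hP'_abs hPs_abs hAs hA'_norm hbr_val hbr_der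

/-- With `a` smooth satisfying `|a⁽ᵏ⁾(r)| ≤ Cₖ r^{-k}`, for all `j ≥ 1`,
`3/4 ≤ r₁ + r₂ ≤ 8/3` (with `r₁, r₂ ≥ 0`), `b ∈ (0,2]`, `α ∈ [-1,1]`:
`∫₀^1 |∂_s[ |𝐧|^{-1/2} a(2^j|𝐧|) ( b cosh(αs)/(2 sinh²(s/2)+b²) − b/(s²/2+b²) ) ]| ds ≤ C`. -/
theorem statement18 (a : ℝ → ℂ) (Ck : ℕ → ℝ)
    (ha_smooth : ContDiffOn ℝ (⊤ : ℕ∞) a (Set.Ioi 0))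
    (ha_bound : ∀ k : ℕ, ∀ r : ℝ, 0 < r →
      ‖iteratedDerivWithin k a (Set.Ioi 0) r‖ ≤ Ck k * r ^ (-(k:ℝ))) :
    ∃ C : ℝ, 0 < C ∧ ∀ j : ℕ, 1 ≤ j →
      ∀ r₁ : ℝ, 0 ≤ r₁ → ∀ r₂ : ℝ, 0 ≤ r₂ → 3/4 ≤ r₁ + r₂ → r₁ + r₂ ≤ 8/3 →
      ∀ b ∈ Set.Ioc (0:ℝ) 2, ∀ α ∈ Set.Icc (-1:ℝ) 1,
      ∫ s in Set.Ioc (0:ℝ) 1,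
          ‖deriv (fun t : ℝ =>
              ((nNorm r₁ r₂ t ^ (-(1/2:ℝ)) : ℝ) : ℂ) * a ((2:ℝ)^(j:ℕ) * nNorm r₁ r₂ t) *
                ((b * Real.cosh (α * t) / (2 * Real.sinh (t/2)^2 + b^2) -
                    b / (t^2/2 + b^2) : ℝ) : ℂ)) s‖ ≤ C := by
  have hdiff : ∀ r : ℝ, 0 < r → DifferentiableAt ℝ a r := by
    intro r hr
    have h := ha_smooth.differentiableOn (by simp)
    exact (h r (Set.mem_Ioi.2 hr)).differentiableAt (Ioi_mem_nhds hr)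
  have h0 : ∀ r : ℝ, 0 < r → ‖a r‖ ≤ Ck 0 := by
    intro r hr
    have h := ha_bound 0 r hr
    simpa [iteratedDerivWithin_zero] using h
  have h1 : ∀ r : ℝ, 0 < r → ‖deriv a r‖ ≤ Ck 1 / r := by
    intro r hr
    have h := ha_bound 1 r hr
    rw [iteratedDerivWithin_one,
      derivWithin_of_isOpen isOpen_Ioi (Set.mem_Ioi.2 hr)] at h
    calc ‖deriv a r‖ ≤ Ck 1 * r ^ (-(1:ℕ):ℝ) := h
      _ = Ck 1 / r := by
          rw [show (-(1:ℕ):ℝ) = -1 by norm_num, Real.rpow_neg_one]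
          rw [div_eq_mul_inv]
  have hB0 : 0 ≤ Ck 0 := le_trans (norm_nonneg (a 1)) (h0 1 one_pos)
  have hB1 : 0 ≤ Ck 1 := by
    have := h1 1 one_pos
    simp only [div_one] at this
    exact le_trans (norm_nonneg _) this
  refine ⟨100*(Ck 0 + Ck 1) + 1, by linarith, ?_⟩
  intro j hj r₁ hr₁ r₂ hr₂ hlo hhi b hb α hα
  have hpt : ∀ s ∈ Set.Ioc (0:ℝ) 1, ‖deriv (fun t : ℝ =>
      ((nNorm r₁ r₂ t ^ (-(1/2:ℝ)) : ℝ) : ℂ) * a ((2:ℝ)^(j:ℕ) * nNorm r₁ r₂ t) *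
        ((b * Real.cosh (α * t) / (2 * Real.sinh (t/2)^2 + b^2) -
            b / (t^2/2 + b^2) : ℝ) : ℂ)) s‖ ≤ 100*(Ck 0 + Ck 1) := by
    intro s hs
    exact key_bound a (Ck 0) (Ck 1) hB0 hB1 hdiff h0 h1 j r₁ r₂ b α s
      hr₁ hr₂ hlo hhi hb.1 hb.2 (abs_le.2 ⟨hα.1, hα.2⟩) hs.1 hs.2
  calc (∫ s in Set.Ioc (0:ℝ) 1, ‖deriv (fun t : ℝ =>
          ((nNorm r₁ r₂ t ^ (-(1/2:ℝ)) : ℝ) : ℂ) * a ((2:ℝ)^(j:ℕ) * nNorm r₁ r₂ t) *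
            ((b * Real.cosh (α * t) / (2 * Real.sinh (t/2)^2 + b^2) -
                b / (t^2/2 + b^2) : ℝ) : ℂ)) s‖)
      ≤ ∫ _ in Set.Ioc (0:ℝ) 1, (100*(Ck 0 + Ck 1)) := by
        apply MeasureTheory.integral_mono_of_nonneg
        · exact Filter.Eventually.of_forall fun s => norm_nonneg _
        · exact MeasureTheory.integrable_const _
        · exact (MeasureTheory.ae_restrict_mem measurableSet_Ioc).mono hpt
    _ = 100*(Ck 0 + Ck 1) := by
        simp [MeasureTheory.integral_const, Real.volume_Ioc]
    _ ≤ 100*(Ck 0 + Ck 1) + 1 := by linarith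
end

section
/- Let a : (0,∞) → ℂ be smooth such that for every integer k ≥ 0 there is C_k with |a^{(k)}(r)| ≤ C_k r^{−k} for all r > 0. Then there exists a constant C (depending only on finitely many C_k) such that for every integer j ≥ 1, all r₁, r₂ ≥ 0 with 3/4 ≤ r₁ + r₂ ≤ 8/3, and all b ∈ (0,2]: ∫_0^1 | ∂_s [ ( |𝐧|^{−1/2} a(2^j |𝐧|) − (r₁+r₂)^{−1/2} a(2^j (r₁+r₂)) ) · b / (s²/2 + b²) ] | ds ≤ C, where |𝐧| = |𝐧|(r₁,r₂,s). -/
open MeasureTheory Real Set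
open scoped ENNReal

lemma cosh_one_le_two : Real.cosh 1 ≤ 2 := by
  rw [Real.cosh_eq]
  have h1 : Real.exp 1 < 2.7182818286 := Real.exp_one_lt_d9
  have h2 : Real.exp (-1) ≤ 1 := by
    rw [Real.exp_le_one_iff]; norm_num
  nlinarith

lemma sinh_le_two_mul {x : ℝ} (hx0 : 0 ≤ x) (hx1 : x ≤ 1) : Real.sinh x ≤ 2 * x := by
  have key : ∀ y ∈ Set.Icc (0:ℝ) 1, ∀ z ∈ Set.Icc (0:ℝ) 1,
      ‖Real.sinh z - Real.sinh y‖ ≤ 2 * ‖z - y‖ := by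
    intro y hy z hz
    refine Convex.norm_image_sub_le_of_norm_hasDerivWithin_le
      (f' := Real.cosh) (fun w _ => (Real.hasDerivAt_sinh w).hasDerivWithinAt)
      (fun w hw => ?_) (convex_Icc _ _) hy hz
    have h1 : Real.cosh w ≤ Real.cosh 1 := by
      rw [Real.cosh_le_cosh]
      rw [Set.mem_Icc] at hw
      rw [abs_of_nonneg hw.1, abs_one]; exact hw.2
    have h2 : 0 ≤ Real.cosh w := (Real.cosh_pos w).le
    rw [Real.norm_eq_abs, abs_of_nonneg h2]
    linarith [cosh_one_le_two]
  have := key 0 (by constructor <;> norm_num) x ⟨hx0, hx1⟩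
  simp only [Real.sinh_zero, sub_zero, Real.norm_eq_abs] at this
  calc Real.sinh x ≤ |Real.sinh x| := le_abs_self _
    _ ≤ 2 * |x| := this
    _ = 2 * x := by rw [abs_of_nonneg hx0]

lemma cosh_sub_one_le {x : ℝ} (hx0 : 0 ≤ x) (hx1 : x ≤ 1) :
    Real.cosh x - 1 ≤ 2 * x ^ 2 := by
  have hid : Real.cosh x = 2 * Real.sinh (x/2) ^ 2 + 1 := by
    have h1 : Real.cosh (2 * (x/2)) = Real.cosh (x/2) ^ 2 + Real.sinh (x/2) ^ 2 :=
      Real.cosh_two_mul _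
    have h2 : Real.cosh (x/2) ^ 2 = Real.sinh (x/2) ^ 2 + 1 := Real.cosh_sq _
    have h3 : (2 : ℝ) * (x/2) = x := by ring
    rw [h3] at h1; rw [h1, h2]; ring
  have hs : Real.sinh (x/2) ≤ 2 * (x/2) := sinh_le_two_mul (by linarith) (by linarith)
  have hs0 : 0 ≤ Real.sinh (x/2) := by
    rw [Real.sinh_nonneg_iff]; linarith
  nlinarith [sq_nonneg (Real.sinh (x/2))]

set_option maxHeartbeats 1000000 in
/-- With `a` smooth satisfying `|a⁽ᵏ⁾(r)| ≤ Cₖ r^{-k}`, for all `j ≥ 1`,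
`3/4 ≤ r₁ + r₂ ≤ 8/3` (with `r₁, r₂ ≥ 0`) and `b ∈ (0,2]`:
`∫₀^1 |∂_s[( |𝐧|^{-1/2} a(2^j|𝐧|) − (r₁+r₂)^{-1/2} a(2^j(r₁+r₂)) ) · b/(s²/2+b²)]| ds ≤ C`. -/
theorem statement19 (a : ℝ → ℂ) (Ck : ℕ → ℝ)
    (ha_smooth : ContDiffOn ℝ (⊤ : ℕ∞) a (Set.Ioi 0))
    (ha_bound : ∀ k : ℕ, ∀ r : ℝ, 0 < r →
      ‖iteratedDerivWithin k a (Set.Ioi 0) r‖ ≤ Ck k * r ^ (-(k:ℝ))) :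
    ∃ C : ℝ, 0 < C ∧ ∀ j : ℕ, 1 ≤ j →
      ∀ r₁ : ℝ, 0 ≤ r₁ → ∀ r₂ : ℝ, 0 ≤ r₂ → 3/4 ≤ r₁ + r₂ → r₁ + r₂ ≤ 8/3 →
      ∀ b ∈ Set.Ioc (0:ℝ) 2,
      ∫ s in Set.Ioc (0:ℝ) 1,
          ‖deriv (fun t : ℝ =>
              (((nNorm r₁ r₂ t ^ (-(1/2:ℝ)) : ℝ) : ℂ) * a ((2:ℝ)^(j:ℕ) * nNorm r₁ r₂ t) -
                  (((r₁ + r₂) ^ (-(1/2:ℝ)) : ℝ) : ℂ) * a ((2:ℝ)^(j:ℕ) * (r₁ + r₂))) *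
                ((b / (t^2/2 + b^2) : ℝ) : ℂ)) s‖ ≤ C := by
  classical
  -- nonnegativity of the constants
  have hC0 : 0 ≤ Ck 0 := by
    have h := ha_bound 0 1 one_pos
    simp only [CharP.cast_eq_zero, neg_zero, Real.rpow_zero, mul_one] at h
    exact (norm_nonneg _).trans h
  have hC1 : 0 ≤ Ck 1 := by
    have h := ha_bound 1 1 one_pos
    simp only [Nat.cast_one, Real.one_rpow, mul_one] at h
    exact (norm_nonneg _).trans h
  set M : ℝ := 2 * (Ck 0 / 2 + Ck 1) with hMdef
  have hM0 : 0 ≤ M := by simp only [hMdef]; linarith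
  refine ⟨16 * M + 1, by linarith, ?_⟩
  intro j hj r₁ hr₁ r₂ hr₂ hR1 hR2 b hb
  obtain ⟨hb0, hb2⟩ := hb
  set R : ℝ := r₁ + r₂ with hRdef
  set ρ : ℝ := r₁ * r₂ with hρdef
  have hρ0 : 0 ≤ ρ := mul_nonneg hr₁ hr₂
  have hρ2 : ρ ≤ 2 := by nlinarith [sq_nonneg (r₁ - r₂)]
  have hR0 : (0:ℝ) < R := by linarith
  -- basic facts about n
  have hq_pos : ∀ t : ℝ, 0 < r₁^2 + r₂^2 + 2 * r₁ * r₂ * Real.cosh t := by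
    intro t
    have h1 : (1:ℝ) ≤ Real.cosh t := Real.one_le_cosh t
    nlinarith [sq_nonneg (r₁ + r₂)]
  have hn_sq : ∀ t : ℝ, nNorm r₁ r₂ t ^ 2 = R^2 + 2*ρ*(Real.cosh t - 1) := by
    intro t
    rw [nNorm, Real.sq_sqrt (hq_pos t).le]
    ring
  have hn_nonneg : ∀ t : ℝ, 0 ≤ nNorm r₁ r₂ t := fun t => Real.sqrt_nonneg _
  have hnR : ∀ t : ℝ, R ≤ nNorm r₁ r₂ t := by
    intro t
    have h1 : (1:ℝ) ≤ Real.cosh t := Real.one_le_cosh t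
    have h2 : R^2 ≤ nNorm r₁ r₂ t ^ 2 := by rw [hn_sq t]; nlinarith
    nlinarith [hn_nonneg t]
  have hn34 : ∀ t : ℝ, (3/4 : ℝ) ≤ nNorm r₁ r₂ t := fun t => le_trans hR1 (hnR t)
  have hn_pos : ∀ t : ℝ, 0 < nNorm r₁ r₂ t := fun t => lt_of_lt_of_le (by norm_num) (hn34 t)
  -- derivative of n
  have hn_deriv : ∀ t : ℝ,
      HasDerivAt (fun u => nNorm r₁ r₂ u) (ρ * Real.sinh t / nNorm r₁ r₂ t) t := by
    intro t
    have hq : HasDerivAt (fun u => r₁^2 + r₂^2 + 2 * r₁ * r₂ * Real.cosh u)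
        (2 * r₁ * r₂ * Real.sinh t) t := by
      have := (Real.hasDerivAt_cosh t).const_mul (2 * r₁ * r₂)
      simpa using this.const_add (r₁^2 + r₂^2)
    have hsq := (Real.hasDerivAt_sqrt (hq_pos t).ne').comp t hq
    have heq : 1 / (2 * Real.sqrt (r₁^2 + r₂^2 + 2 * r₁ * r₂ * Real.cosh t)) *
        (2 * r₁ * r₂ * Real.sinh t) = ρ * Real.sinh t / nNorm r₁ r₂ t := by
      rw [nNorm, hρdef]
      field_simp
    rw [heq] at hsq
    exact hsq
  -- the radial function F and its derivative
  set F : ℝ → ℂ := fun x => ((x ^ (-(1/2:ℝ)) : ℝ) : ℂ) * a ((2:ℝ)^(j:ℕ) * x) with hFdef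
  set F' : ℝ → ℂ := fun x => ((-(1/2) * x ^ (-(3/2:ℝ)) : ℝ) : ℂ) * a ((2:ℝ)^(j:ℕ) * x)
      + ((x ^ (-(1/2:ℝ)) : ℝ) : ℂ) * (((2:ℝ)^(j:ℕ) : ℝ) • deriv a ((2:ℝ)^(j:ℕ) * x)) with hF'def
  have h2j_pos : (0:ℝ) < (2:ℝ)^(j:ℕ) := by positivity
  have hF : ∀ x : ℝ, 0 < x → HasDerivAt F (F' x) x := by
    intro x hx
    have h2jx : (0:ℝ) < (2:ℝ)^(j:ℕ) * x := mul_pos h2j_pos hx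
    have hu : HasDerivAt (fun y : ℝ => ((y ^ (-(1/2:ℝ)) : ℝ) : ℂ))
        ((-(1/2) * x ^ (-(3/2:ℝ)) : ℝ) : ℂ) x := by
      have h1 : HasDerivAt (fun y : ℝ => y ^ (-(1/2:ℝ)))
          (-(1/2) * x ^ ((-(1/2:ℝ)) - 1)) x := Real.hasDerivAt_rpow_const (Or.inl hx.ne')
      have h2 : (-(1/2:ℝ)) - 1 = -(3/2:ℝ) := by norm_num
      rw [h2] at h1
      exact h1.ofReal_comp
    have hinner : HasDerivAt (fun y : ℝ => (2:ℝ)^(j:ℕ) * y) ((2:ℝ)^(j:ℕ)) x := by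
      simpa using (hasDerivAt_id x).const_mul ((2:ℝ)^(j:ℕ))
    have ha_diff : DifferentiableAt ℝ a ((2:ℝ)^(j:ℕ) * x) := by
      have hmem2 : ((2:ℝ)^(j:ℕ) * x) ∈ Set.Ioi (0:ℝ) := h2jx
      have hca := ha_smooth.contDiffAt (isOpen_Ioi.mem_nhds hmem2)
      exact hca.differentiableAt (by simp)
    have hv : HasDerivAt (fun y : ℝ => a ((2:ℝ)^(j:ℕ) * y))
        (((2:ℝ)^(j:ℕ) : ℝ) • deriv a ((2:ℝ)^(j:ℕ) * x)) x :=
      HasDerivAt.scomp x ha_diff.hasDerivAt hinner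
    exact hu.mul hv
  -- bound on the derivative of F
  have hrpow32 : ∀ x : ℝ, 3/4 ≤ x → x ^ (-(3/2:ℝ)) ≤ 2 := by
    intro x hx
    have hx0 : (0:ℝ) < x := by linarith
    have h34 : ((3/4:ℝ)) ^ ((3/2:ℝ)) ≥ 1/2 := by
      set y : ℝ := ((3/4:ℝ)) ^ ((3/2:ℝ)) with hy
      have hy0 : 0 ≤ y := Real.rpow_nonneg (by norm_num) _
      have hysq : y ^ 2 = (3/4:ℝ)^(3:ℕ) := by
        rw [hy, ← Real.rpow_natCast (((3/4:ℝ)) ^ ((3/2:ℝ))) 2, ← Real.rpow_mul (by norm_num)]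
        norm_num
      nlinarith
    have hmono : ((3/4:ℝ)) ^ ((3/2:ℝ)) ≤ x ^ ((3/2:ℝ)) :=
      Real.rpow_le_rpow (by norm_num) hx (by norm_num)
    have hxpos : (0:ℝ) < x ^ ((3/2:ℝ)) := Real.rpow_pos_of_pos hx0 _
    rw [Real.rpow_neg hx0.le]
    rw [inv_le_comm₀ hxpos (by norm_num : (0:ℝ) < 2)]
    norm_num
    linarith
  have hF'bound : ∀ x : ℝ, 3/4 ≤ x → ‖F' x‖ ≤ M := by
    intro x hx
    have hx0 : (0:ℝ) < x := by linarith
    have h2jx : (0:ℝ) < (2:ℝ)^(j:ℕ) * x := mul_pos h2j_pos hx0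
    -- bound ‖a (2^j x)‖
    have ha0 : ‖a ((2:ℝ)^(j:ℕ) * x)‖ ≤ Ck 0 := by
      have h := ha_bound 0 ((2:ℝ)^(j:ℕ) * x) h2jx
      simpa using h
    -- bound ‖deriv a (2^j x)‖
    have ha1 : ‖deriv a ((2:ℝ)^(j:ℕ) * x)‖ ≤ Ck 1 * ((2:ℝ)^(j:ℕ) * x)⁻¹ := by
      have h := ha_bound 1 ((2:ℝ)^(j:ℕ) * x) h2jx
      have hmem : ((2:ℝ)^(j:ℕ) * x) ∈ Set.Ioi (0:ℝ) := h2jx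
      rw [iteratedDerivWithin_one,
        derivWithin_of_isOpen isOpen_Ioi hmem] at h
      simpa [Real.rpow_neg_one] using h
    have hterm2 : ‖((x ^ (-(1/2:ℝ)) : ℝ) : ℂ) * (((2:ℝ)^(j:ℕ) : ℝ) • deriv a ((2:ℝ)^(j:ℕ) * x))‖
        ≤ Ck 1 * x ^ (-(3/2:ℝ)) := by
      rw [norm_mul, norm_smul, Complex.norm_real, Real.norm_eq_abs, Real.norm_eq_abs,
        abs_of_nonneg (Real.rpow_nonneg hx0.le _), abs_of_nonneg h2j_pos.le]
      have e1 : (2:ℝ)^(j:ℕ) * ((2:ℝ)^(j:ℕ) * x)⁻¹ = x⁻¹ := by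
        rw [mul_inv, ← mul_assoc, mul_inv_cancel₀ (ne_of_gt h2j_pos), one_mul]
      have h1 : x ^ (-(1/2:ℝ)) * ((2:ℝ)^(j:ℕ) * (Ck 1 * ((2:ℝ)^(j:ℕ) * x)⁻¹))
          = Ck 1 * x ^ (-(3/2:ℝ)) := by
        calc x ^ (-(1/2:ℝ)) * ((2:ℝ)^(j:ℕ) * (Ck 1 * ((2:ℝ)^(j:ℕ) * x)⁻¹))
            = Ck 1 * ((2:ℝ)^(j:ℕ) * ((2:ℝ)^(j:ℕ) * x)⁻¹) * x ^ (-(1/2:ℝ)) := by ring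
          _ = Ck 1 * x⁻¹ * x ^ (-(1/2:ℝ)) := by rw [e1]
          _ = Ck 1 * x ^ (-(3/2:ℝ)) := by
              rw [mul_assoc, ← Real.rpow_neg_one x, ← Real.rpow_add hx0]
              norm_num
      calc x ^ (-(1/2:ℝ)) * ((2:ℝ)^(j:ℕ) * ‖deriv a ((2:ℝ)^(j:ℕ) * x)‖)
          ≤ x ^ (-(1/2:ℝ)) * ((2:ℝ)^(j:ℕ) * (Ck 1 * ((2:ℝ)^(j:ℕ) * x)⁻¹)) := by
            apply mul_le_mul_of_nonneg_left _ (Real.rpow_nonneg hx0.le _)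
            exact mul_le_mul_of_nonneg_left ha1 h2j_pos.le
        _ = Ck 1 * x ^ (-(3/2:ℝ)) := h1
    have hterm1 : ‖((-(1/2) * x ^ (-(3/2:ℝ)) : ℝ) : ℂ) * a ((2:ℝ)^(j:ℕ) * x)‖
        ≤ (1/2) * x ^ (-(3/2:ℝ)) * Ck 0 := by
      rw [norm_mul, Complex.norm_real, Real.norm_eq_abs, abs_mul, abs_neg,
        abs_of_nonneg (Real.rpow_nonneg hx0.le _)]
      have : |(1/2:ℝ)| = 1/2 := by norm_num
      rw [this]
      exact mul_le_mul_of_nonneg_left ha0 (by positivity)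
    have hnorm := norm_add_le (((-(1/2) * x ^ (-(3/2:ℝ)) : ℝ) : ℂ) * a ((2:ℝ)^(j:ℕ) * x))
      (((x ^ (-(1/2:ℝ)) : ℝ) : ℂ) * (((2:ℝ)^(j:ℕ) : ℝ) • deriv a ((2:ℝ)^(j:ℕ) * x)))
    have hx32 : x ^ (-(3/2:ℝ)) ≤ 2 := hrpow32 x hx
    have hx32' : 0 ≤ x ^ (-(3/2:ℝ)) := Real.rpow_nonneg hx0.le _
    calc ‖F' x‖ ≤ (1/2) * x ^ (-(3/2:ℝ)) * Ck 0 + Ck 1 * x ^ (-(3/2:ℝ)) :=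
          hnorm.trans (add_le_add hterm1 hterm2)
      _ ≤ M := by rw [hMdef]; nlinarith
  -- Lipschitz bound for F on [3/4, ∞)
  have hLip : ∀ x y : ℝ, 3/4 ≤ x → 3/4 ≤ y → ‖F y - F x‖ ≤ M * |y - x| := by
    intro x y hx hy
    have := Convex.norm_image_sub_le_of_norm_hasDerivWithin_le
      (f := F) (f' := F') (s := Set.Ici (3/4:ℝ))
      (fun w hw => (hF w (lt_of_lt_of_le (by norm_num) hw)).hasDerivWithinAt)
      (fun w hw => hF'bound w hw) (convex_Ici _) hx hy
    simpa using this
  -- now the pointwise bound on the derivative of the integrand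
  have hmain : ∀ s ∈ Set.Ioc (0:ℝ) 1,
      ‖deriv (fun t : ℝ =>
          (((nNorm r₁ r₂ t ^ (-(1/2:ℝ)) : ℝ) : ℂ) * a ((2:ℝ)^(j:ℕ) * nNorm r₁ r₂ t) -
              (((r₁ + r₂) ^ (-(1/2:ℝ)) : ℝ) : ℂ) * a ((2:ℝ)^(j:ℕ) * (r₁ + r₂))) *
            ((b / (t^2/2 + b^2) : ℝ) : ℂ)) s‖ ≤ 16 * M := by
    intro s hs
    obtain ⟨hs0, hs1⟩ := hs
    set ns : ℝ := nNorm r₁ r₂ s with hnsdef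
    -- derivative of G := F ∘ n - const
    have hG : HasDerivAt (fun t : ℝ =>
        (((nNorm r₁ r₂ t ^ (-(1/2:ℝ)) : ℝ) : ℂ) * a ((2:ℝ)^(j:ℕ) * nNorm r₁ r₂ t) -
          (((r₁ + r₂) ^ (-(1/2:ℝ)) : ℝ) : ℂ) * a ((2:ℝ)^(j:ℕ) * (r₁ + r₂))))
        ((ρ * Real.sinh s / ns : ℝ) • F' ns) s := by
      have h1 : HasDerivAt (F ∘ fun u => nNorm r₁ r₂ u)
          ((ρ * Real.sinh s / ns : ℝ) • F' ns) s :=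
        HasDerivAt.scomp s (hF ns (hn_pos s)) (hn_deriv s)
      have h2 := h1.sub_const ((((r₁ + r₂) ^ (-(1/2:ℝ)) : ℝ) : ℂ) * a ((2:ℝ)^(j:ℕ) * (r₁ + r₂)))
      exact h2
    -- derivative of H := b / (t^2/2 + b^2)
    have hden_pos : ∀ t : ℝ, (0:ℝ) < t^2/2 + b^2 := by intro t; positivity
    have hH : HasDerivAt (fun t : ℝ => ((b / (t^2/2 + b^2) : ℝ) : ℂ))
        ((-(b * s) / (s^2/2 + b^2)^2 : ℝ) : ℂ) s := by
      apply HasDerivAt.ofReal_comp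
      have hd : HasDerivAt (fun t : ℝ => t^2/2 + b^2) s s := by
        have h1 : HasDerivAt (fun t : ℝ => t^2) (2 * s) s := by
          simpa using hasDerivAt_pow 2 s
        have h2 := (h1.div_const 2).add_const (b^2)
        simpa using h2
      have h3 := (hasDerivAt_const s b).div hd (hden_pos s).ne'
      have heq : (0 * (s^2/2 + b^2) - b * s) / (s^2/2 + b^2)^2
          = -(b * s) / (s^2/2 + b^2)^2 := by ring
      rwa [heq] at h3
    have hΦ := hG.fun_mul hH
    rw [hΦ.deriv]
    -- now bound the two terms
    have hns34 : (3/4:ℝ) ≤ ns := hn34 s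
    have hnspos : (0:ℝ) < ns := hn_pos s
    have hsinh0 : 0 ≤ Real.sinh s := by rw [Real.sinh_nonneg_iff]; linarith
    have hsinh : Real.sinh s ≤ 2 * s := sinh_le_two_mul hs0.le hs1
    have hcosh : Real.cosh s - 1 ≤ 2 * s^2 := cosh_sub_one_le hs0.le hs1
    have hcosh0 : (0:ℝ) ≤ Real.cosh s - 1 := by linarith [Real.one_le_cosh s]
    -- ‖G' s‖ ≤ 16/3 * M * s
    have hG'bound : ‖(ρ * Real.sinh s / ns : ℝ) • F' ns‖ ≤ 16/3 * M * s := by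
      rw [norm_smul, Real.norm_eq_abs,
        abs_of_nonneg (by positivity : (0:ℝ) ≤ ρ * Real.sinh s / ns)]
      have h1 : ρ * Real.sinh s / ns ≤ 16/3 * s := by
        rw [div_le_iff₀ hnspos]
        nlinarith
      calc ρ * Real.sinh s / ns * ‖F' ns‖ ≤ (16/3 * s) * M := by
            apply mul_le_mul h1 (hF'bound ns hns34) (norm_nonneg _) (by positivity)
        _ = 16/3 * M * s := by ring
    -- ‖H s‖ ≤ 1/s
    have hHbound : ‖((b / (s^2/2 + b^2) : ℝ) : ℂ)‖ ≤ 1/s := by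
      rw [Complex.norm_real, Real.norm_eq_abs,
        abs_of_nonneg (by positivity : (0:ℝ) ≤ b / (s^2/2 + b^2))]
      rw [div_le_div_iff₀ (hden_pos s) hs0]
      nlinarith [sq_nonneg (s - b), sq_nonneg b]
    -- ‖G s‖ ≤ 16/3 * M * s^2
    have hGbound : ‖(((ns ^ (-(1/2:ℝ)) : ℝ) : ℂ) * a ((2:ℝ)^(j:ℕ) * ns) -
        (((r₁ + r₂) ^ (-(1/2:ℝ)) : ℝ) : ℂ) * a ((2:ℝ)^(j:ℕ) * (r₁ + r₂)))‖
        ≤ 16/3 * M * s^2 := by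
      have hFG : (((ns ^ (-(1/2:ℝ)) : ℝ) : ℂ) * a ((2:ℝ)^(j:ℕ) * ns) -
          (((r₁ + r₂) ^ (-(1/2:ℝ)) : ℝ) : ℂ) * a ((2:ℝ)^(j:ℕ) * (r₁ + r₂))) = F ns - F R := rfl
      rw [hFG]
      have h1 := hLip R ns hR1 hns34
      have hdiff : ns - R ≤ 16/3 * s^2 := by
        have hsq : (ns - R) * (ns + R) = 2*ρ*(Real.cosh s - 1) := by
          have := hn_sq s
          rw [← hnsdef] at this
          nlinarith [this]
        have hsum : (3/2:ℝ) ≤ ns + R := by linarith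
        have hnum : 2*ρ*(Real.cosh s - 1) ≤ 8 * s^2 := by nlinarith
        nlinarith [hnR s]
      have habs : |ns - R| = ns - R := abs_of_nonneg (by linarith [hnR s])
      rw [habs] at h1
      calc ‖F ns - F R‖ ≤ M * (ns - R) := h1
        _ ≤ M * (16/3 * s^2) := mul_le_mul_of_nonneg_left hdiff hM0
        _ = 16/3 * M * s^2 := by ring
    -- ‖H' s‖ ≤ 2/s^2
    have hH'bound : ‖((-(b * s) / (s^2/2 + b^2)^2 : ℝ) : ℂ)‖ ≤ 2/s^2 := by
      rw [Complex.norm_real, Real.norm_eq_abs]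
      have : |(-(b * s) / (s^2/2 + b^2)^2 : ℝ)| = b * s / (s^2/2 + b^2)^2 := by
        rw [abs_div, abs_neg, abs_of_nonneg (by positivity : (0:ℝ) ≤ b * s),
          abs_of_nonneg (by positivity : (0:ℝ) ≤ (s^2/2 + b^2)^2)]
      rw [this, div_le_div_iff₀ (by positivity) (by positivity)]
      -- b s * s^2 ≤ 2 * (s^2/2 + b^2)^2 : since (s^2/2+b^2)^2 ≥ (s b)(s^2/2)
      nlinarith [sq_nonneg (s^2/2 - b^2), sq_nonneg (s - b), sq_nonneg (s*b), mul_pos hs0 hb0,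
        mul_pos (mul_pos hs0 hs0) (mul_pos hs0 hb0)]
    -- combine
    calc ‖(ρ * Real.sinh s / ns : ℝ) • F' ns * ((b / (s^2/2 + b^2) : ℝ) : ℂ) +
          (((ns ^ (-(1/2:ℝ)) : ℝ) : ℂ) * a ((2:ℝ)^(j:ℕ) * ns) -
            (((r₁ + r₂) ^ (-(1/2:ℝ)) : ℝ) : ℂ) * a ((2:ℝ)^(j:ℕ) * (r₁ + r₂))) *
            ((-(b * s) / (s^2/2 + b^2)^2 : ℝ) : ℂ)‖
        ≤ ‖(ρ * Real.sinh s / ns : ℝ) • F' ns‖ * ‖((b / (s^2/2 + b^2) : ℝ) : ℂ)‖ +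
          ‖(((ns ^ (-(1/2:ℝ)) : ℝ) : ℂ) * a ((2:ℝ)^(j:ℕ) * ns) -
            (((r₁ + r₂) ^ (-(1/2:ℝ)) : ℝ) : ℂ) * a ((2:ℝ)^(j:ℕ) * (r₁ + r₂)))‖ *
          ‖((-(b * s) / (s^2/2 + b^2)^2 : ℝ) : ℂ)‖ := by
          refine (norm_add_le _ _).trans ?_
          rw [norm_mul, norm_mul]
      _ ≤ (16/3 * M * s) * (1/s) + (16/3 * M * s^2) * (2/s^2) := by
          apply add_le_add
          · exact mul_le_mul hG'bound hHbound (norm_nonneg _) (by positivity)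
          · exact mul_le_mul hGbound hH'bound (norm_nonneg _) (by positivity)
      _ = 16 * M := by field_simp; ring
  -- conclude with the integral bound
  have hmeas : MeasurableSet (Set.Ioc (0:ℝ) 1) := measurableSet_Ioc
  have hfin : (volume : Measure ℝ) (Set.Ioc (0:ℝ) 1) < ⊤ := by
    rw [Real.volume_Ioc]
    exact ENNReal.ofReal_lt_top
  have hbound := norm_setIntegral_le_of_norm_le_const_ae' (μ := volume)
    (f := fun s => ‖deriv (fun t : ℝ =>
        (((nNorm r₁ r₂ t ^ (-(1/2:ℝ)) : ℝ) : ℂ) * a ((2:ℝ)^(j:ℕ) * nNorm r₁ r₂ t) -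
            (((r₁ + r₂) ^ (-(1/2:ℝ)) : ℝ) : ℂ) * a ((2:ℝ)^(j:ℕ) * (r₁ + r₂))) *
          ((b / (t^2/2 + b^2) : ℝ) : ℂ)) s‖)
    hfin (Filter.Eventually.of_forall (fun s hs => by
      rw [Real.norm_eq_abs, abs_of_nonneg (norm_nonneg _)]
      exact hmain s hs))
  have hvol : ((volume : Measure ℝ) (Set.Ioc (0:ℝ) 1)).toReal = 1 := by
    rw [Real.volume_Ioc]
    norm_num
  rw [measureReal_def, hvol, mul_one] at hbound
  calc (∫ s in Set.Ioc (0:ℝ) 1, ‖deriv (fun t : ℝ =>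
        (((nNorm r₁ r₂ t ^ (-(1/2:ℝ)) : ℝ) : ℂ) * a ((2:ℝ)^(j:ℕ) * nNorm r₁ r₂ t) -
            (((r₁ + r₂) ^ (-(1/2:ℝ)) : ℝ) : ℂ) * a ((2:ℝ)^(j:ℕ) * (r₁ + r₂))) *
          ((b / (t^2/2 + b^2) : ℝ) : ℂ)) s‖)
      ≤ ‖∫ s in Set.Ioc (0:ℝ) 1, ‖deriv (fun t : ℝ =>
        (((nNorm r₁ r₂ t ^ (-(1/2:ℝ)) : ℝ) : ℂ) * a ((2:ℝ)^(j:ℕ) * nNorm r₁ r₂ t) -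
            (((r₁ + r₂) ^ (-(1/2:ℝ)) : ℝ) : ℂ) * a ((2:ℝ)^(j:ℕ) * (r₁ + r₂))) *
          ((b / (t^2/2 + b^2) : ℝ) : ℂ)) s‖‖ := le_abs_self _
    _ ≤ 16 * M := hbound
    _ ≤ 16 * M + 1 := by linarith
end
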